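/- arXiv:2010.10494 — 2 statements merged into one kernel-verified Lean document; each statement's English description precedes it below -/
import Mathlib

section
/- For every even integer m ≥ 8 there exists a decentralized linear code of length ℓ = m/2 for parameters (m, s = 3) that is both correct and secure. -/
namespace SDPicod

/-- Side information set of user `i`: the `s` cyclically consecutive message
indices ending at `i`, i.e. `{i - k : k ∈ Finset.range s}`. -/
def sideInfo (m s : ℕ) (i : ZMod m) : Set (ZMod m) :=
  {j | ∃ k ∈ Finset.range s, j = i - (k : ZMod m)}

/-- A decentralized linear code: every row is encodable by some user, i.e.
its support is contained in that user's side information set. -/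
def IsDecentralizedCode (m s : ℕ) {ℓ : ℕ} (G : Fin ℓ → ZMod m → ZMod 2) : Prop :=
  ∀ t : Fin ℓ, ∃ i : ZMod m, Function.support (G t) ⊆ sideInfo m s i

/-- The set of message indices user `i` can decode: indices `j` outside the
side information set such that the standard basis vector `e j` lies in the
`GF(2)`-span of the rows of `G` together with the basis vectors of the
side information set. -/
def decSet (m s : ℕ) {ℓ : ℕ} (G : Fin ℓ → ZMod m → ZMod 2) (i : ZMod m) :
    Set (ZMod m) :=
  {j | j ∉ sideInfo m s i ∧
    Pi.single j (1 : ZMod 2) ∈ Submodule.span (ZMod 2)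
      (Set.range G ∪ {v | ∃ k ∈ sideInfo m s i, v = Pi.single k (1 : ZMod 2)})}

/-- Correctness: every user can decode at least one new message. -/
def Correct (m s : ℕ) {ℓ : ℕ} (G : Fin ℓ → ZMod m → ZMod 2) : Prop :=
  ∀ i : ZMod m, (decSet m s G i).Nonempty

/-- Security: no user can decode more than one new message. -/
def Secure (m s : ℕ) {ℓ : ℕ} (G : Fin ℓ → ZMod m → ZMod 2) : Prop :=
  ∀ i : ZMod m, (decSet m s G i).Subsingleton

end SDPicod

open SDPicod

/-!
The code sends `e (2t) + e (2t + 1)` for every `t`, pairing each index `j` with a partner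
`σ j`. A user knowing `σ j` decodes `j` by subtracting `e (σ j)` from the row of that pair;
conversely, if it knows neither `j` nor `σ j`, the functional `v ↦ v j - v (σ j)` vanishes on all
rows and on all known basis vectors but not on `e j`. So user `i` decodes exactly the indices
outside `A i = {i, i - 1, i - 2}` whose partner lies in `A i`. Since `A i` consists of one full
pair and half of another, there is exactly one such index: `i + 1` for even `i`, `i - 3` for
odd `i`.
-/

namespace SDPicod

section Span

variable {ι R : Type*} [DecidableEq ι] [Ring R] {ℓ : ℕ} {G : Fin ℓ → ι → R} {A : Set ι}

theorem single_mem_span_of_row_eq {j k : ι} {t : Fin ℓ}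
    (ht : G t = Pi.single j 1 + Pi.single k 1) (hk : k ∈ A) :
    Pi.single j 1 ∈ Submodule.span R (Set.range G ∪ {v | ∃ k ∈ A, v = Pi.single k 1}) := by
  rw [show Pi.single j 1 = G t - Pi.single k 1 by rw [ht, add_sub_cancel_right]]
  exact Submodule.sub_mem _ (Submodule.subset_span (Or.inl ⟨t, rfl⟩))
    (Submodule.subset_span (Or.inr ⟨k, hk, rfl⟩))

theorem single_notMem_span_of_forall_apply_eq [Nontrivial R] {j k : ι} (hjk : j ≠ k)
    (hG : ∀ t, G t j = G t k) (hj : j ∉ A) (hk : k ∉ A) :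
    Pi.single j 1 ∉ Submodule.span R (Set.range G ∪ {v | ∃ k ∈ A, v = Pi.single k 1}) := by
  set L : (ι → R) →ₗ[R] R :=
    (LinearMap.proj j : (ι → R) →ₗ[R] R) - (LinearMap.proj k : (ι → R) →ₗ[R] R)
  have hle :
      Submodule.span R (Set.range G ∪ {v | ∃ k ∈ A, v = Pi.single k 1}) ≤ LinearMap.ker L := by
    rw [Submodule.span_le]
    rintro v (⟨t, rfl⟩ | ⟨i, hi, rfl⟩)
    · simp [L, hG t]
    · have hji : j ≠ i := fun h => hj (h ▸ hi)
      have hki : k ≠ i := fun h => hk (h ▸ hi)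
      simp [L, Pi.single_eq_of_ne hji, Pi.single_eq_of_ne hki]
  intro hmem
  simpa [L, Pi.single_eq_of_ne hjk.symm] using hle hmem

end Span

section Pairing

variable {m : ℕ} (h2 : 2 ∣ m)

def parity : ZMod m →+* ZMod 2 := ZMod.castHom h2 (ZMod 2)

/-- The partner of `j` under the pairing `{2t, 2t + 1}` of indices. -/
def partner (j : ZMod m) : ZMod m :=
  if parity h2 j = 0 then j + 1 else j - 1

theorem parity_eq_zero_or_eq_one (x : ZMod m) : parity h2 x = 0 ∨ parity h2 x = 1 := by
  generalize parity h2 x = y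
  revert y
  decide

theorem partner_of_parity_eq_zero {j : ZMod m} (hj : parity h2 j = 0) : partner h2 j = j + 1 :=
  if_pos hj

theorem partner_of_parity_eq_one {j : ZMod m} (hj : parity h2 j = 1) : partner h2 j = j - 1 :=
  if_neg (by simp [hj])

theorem partner_involutive : Function.Involutive (partner h2) := by
  intro j
  rcases parity_eq_zero_or_eq_one h2 j with hj | hj
  · have hj1 : parity h2 (j + 1) = 1 := by rw [map_add, map_one, hj, zero_add]
    rw [partner_of_parity_eq_zero h2 hj, partner_of_parity_eq_one h2 hj1, add_sub_cancel_right]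
  · have hj1 : parity h2 (j - 1) = 0 := by rw [map_sub, map_one, hj, sub_self]
    rw [partner_of_parity_eq_one h2 hj, partner_of_parity_eq_zero h2 hj1, sub_add_cancel]

theorem ne_zero_of_parity_ne_zero {x : ZMod m} (hx : parity h2 x ≠ 0) : x ≠ 0 :=
  fun h => hx (h ▸ map_zero _)

theorem partner_ne_self (j : ZMod m) : partner h2 j ≠ j := by
  have h1 : (1 : ZMod m) ≠ 0 := ne_zero_of_parity_ne_zero h2 (by simp)
  unfold partner
  split_ifs
  · simpa using h1
  · simpa [sub_eq_self] using h1

theorem exists_two_mul_eq [NeZero m] {x : ZMod m} (hx : parity h2 x = 0) :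
    ∃ t : Fin (m / 2), ((2 * t : ℕ) : ZMod m) = x := by
  have hval : 2 ∣ x.val := by
    rw [← ZMod.natCast_eq_zero_iff, ← ZMod.cast_natCast h2, ZMod.natCast_zmod_val]
    exact hx
  obtain ⟨c, hc⟩ := hval
  exact ⟨⟨c, by have := ZMod.val_lt x; omega⟩, by rw [← hc, ZMod.natCast_zmod_val]⟩

end Pairing

def pairCode (m : ℕ) : Fin (m / 2) → ZMod m → ZMod 2 :=
  fun t => Pi.single ((2 * t : ℕ) : ZMod m) 1 + Pi.single ((2 * t : ℕ) + 1 : ZMod m) 1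

section PairCode

variable {m : ℕ} (h2 : 2 ∣ m)

theorem pairCode_apply (t : Fin (m / 2)) :
    pairCode m t = Pi.single ((2 * t : ℕ) : ZMod m) 1 +
      Pi.single (partner h2 ((2 * t : ℕ) : ZMod m)) 1 := by
  have heven : parity h2 ((2 * t : ℕ) : ZMod m) = 0 := by
    rw [parity, map_natCast]
    exact (ZMod.natCast_eq_zero_iff _ 2).mpr (dvd_mul_right 2 _)
  rw [pairCode, partner_of_parity_eq_zero h2 heven]

theorem pairCode_apply_partner (t : Fin (m / 2)) (j : ZMod m) :
    pairCode m t (partner h2 j) = pairCode m t j := by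
  have hσ := partner_involutive h2
  simp only [pairCode_apply h2, Pi.add_apply, Pi.single_apply, hσ.eq_iff]
  rw [hσ, add_comm]

theorem exists_pairCode_eq [NeZero m] (j : ZMod m) :
    ∃ t, pairCode m t = Pi.single j 1 + Pi.single (partner h2 j) 1 := by
  rcases parity_eq_zero_or_eq_one h2 j with hj | hj
  · obtain ⟨t, ht⟩ := exists_two_mul_eq h2 hj
    exact ⟨t, by rw [pairCode_apply h2, ht]⟩
  · have hσj : parity h2 (partner h2 j) = 0 := by
      rw [partner_of_parity_eq_one h2 hj, map_sub, map_one, hj, sub_self]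
    obtain ⟨t, ht⟩ := exists_two_mul_eq h2 hσj
    exact ⟨t, by rw [pairCode_apply h2, ht, partner_involutive h2, add_comm]⟩

theorem mem_decSet_pairCode_iff [NeZero m] (s : ℕ) (i j : ZMod m) :
    j ∈ decSet m s (pairCode m) i ↔ j ∉ sideInfo m s i ∧ partner h2 j ∈ sideInfo m s i := by
  refine ⟨fun ⟨hj, hspan⟩ => ⟨hj, ?_⟩, fun ⟨hj, hσj⟩ => ⟨hj, ?_⟩⟩
  · by_contra hσj
    exact single_notMem_span_of_forall_apply_eq (partner_ne_self h2 j).symm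
      (fun t => (pairCode_apply_partner h2 t j).symm) hj hσj hspan
  · obtain ⟨t, ht⟩ := exists_pairCode_eq h2 j
    exact single_mem_span_of_row_eq ht hσj

theorem pairCode_isDecentralizedCode {s : ℕ} (hs : 2 ≤ s) :
    IsDecentralizedCode m s (pairCode m) := by
  intro t
  refine ⟨((2 * t : ℕ) : ZMod m) + 1,
    (Function.support_add (Pi.single _ 1) (Pi.single _ 1)).trans ?_⟩
  rw [Pi.support_single_of_ne one_ne_zero, Pi.support_single_of_ne one_ne_zero]
  rintro x (rfl | rfl)
  · exact ⟨1, Finset.mem_range.mpr (by omega), by push_cast; ring⟩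
  · exact ⟨0, Finset.mem_range.mpr (by omega), by push_cast; ring⟩

end PairCode

theorem mem_sideInfo_three {m : ℕ} {i j : ZMod m} :
    j ∈ sideInfo m 3 i ↔ j = i ∨ j = i - 1 ∨ j = i - 2 := by
  simp [sideInfo, Finset.range_add_one]
  tauto

section SideInfoThree

variable {m : ℕ}

theorem partner_mem_sideInfo_three_iff_of_parity_eq_zero (h2 : 2 ∣ m) (h2m : (2 : ZMod m) ≠ 0)
    {i : ZMod m} (hi : parity h2 i = 0) (j : ZMod m) :
    j ∉ sideInfo m 3 i ∧ partner h2 j ∈ sideInfo m 3 i ↔ j = i + 1 := by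
  have hσ := partner_involutive h2
  have hσi2 : partner h2 (i - 2) = i - 1 := by
    rw [partner_of_parity_eq_zero h2 (by rw [map_sub, map_ofNat, hi]; decide)]; ring
  have hσi1 : partner h2 (i - 1) = i - 2 := hσ.eq_iff.mpr hσi2.symm
  have h1 : (1 : ZMod m) ≠ 0 := ne_zero_of_parity_ne_zero h2 (by simp)
  have h3 : (3 : ZMod m) ≠ 0 := ne_zero_of_parity_ne_zero h2 (by rw [map_ofNat]; decide)
  simp only [mem_sideInfo_three, hσ.eq_iff, partner_of_parity_eq_zero h2 hi, hσi1, hσi2]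
  constructor
  · rintro ⟨hA, h | h | h⟩
    · exact h
    · exact absurd (Or.inr (Or.inr h)) hA
    · exact absurd (Or.inr (Or.inl h)) hA
  · rintro rfl
    refine ⟨?_, Or.inl rfl⟩
    rintro (h | h | h)
    · exact h1 (by linear_combination h)
    · exact h2m (by linear_combination h)
    · exact h3 (by linear_combination h)

theorem partner_mem_sideInfo_three_iff_of_parity_eq_one (h2 : 2 ∣ m) (h2m : (2 : ZMod m) ≠ 0)
    {i : ZMod m} (hi : parity h2 i = 1) (j : ZMod m) :
    j ∉ sideInfo m 3 i ∧ partner h2 j ∈ sideInfo m 3 i ↔ j = i - 3 := by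
  have hσ := partner_involutive h2
  have hσi1 : partner h2 (i - 1) = i := by
    rw [partner_of_parity_eq_zero h2 (by rw [map_sub, map_one, hi]; decide)]; ring
  have hσi : partner h2 i = i - 1 := hσ.eq_iff.mpr hσi1.symm
  have hσi3 : partner h2 (i - 3) = i - 2 := by
    rw [partner_of_parity_eq_zero h2 (by rw [map_sub, map_ofNat, hi]; decide)]; ring
  have hσi2 : partner h2 (i - 2) = i - 3 := hσ.eq_iff.mpr hσi3.symm
  have h1 : (1 : ZMod m) ≠ 0 := ne_zero_of_parity_ne_zero h2 (by simp)
  have h3 : (3 : ZMod m) ≠ 0 := ne_zero_of_parity_ne_zero h2 (by rw [map_ofNat]; decide)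
  simp only [mem_sideInfo_three, hσ.eq_iff, hσi, hσi1, hσi2]
  constructor
  · rintro ⟨hA, h | h | h⟩
    · exact absurd (Or.inr (Or.inl h)) hA
    · exact absurd (Or.inl h) hA
    · exact h
  · rintro rfl
    refine ⟨?_, Or.inr (Or.inr rfl)⟩
    rintro (h | h | h)
    · exact h3 (by linear_combination -h)
    · exact h2m (by linear_combination -h)
    · exact h1 (by linear_combination -h)

theorem exists_decSet_pairCode_three_eq_singleton [NeZero m] (h2 : 2 ∣ m)
    (h2m : (2 : ZMod m) ≠ 0) (i : ZMod m) : ∃ j, decSet m 3 (pairCode m) i = {j} := by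
  rcases parity_eq_zero_or_eq_one h2 i with hi | hi
  · exact ⟨i + 1, Set.ext fun j => (mem_decSet_pairCode_iff h2 3 i j).trans
      (partner_mem_sideInfo_three_iff_of_parity_eq_zero h2 h2m hi j)⟩
  · exact ⟨i - 3, Set.ext fun j => (mem_decSet_pairCode_iff h2 3 i j).trans
      (partner_mem_sideInfo_three_iff_of_parity_eq_one h2 h2m hi j)⟩

end SideInfoThree

end SDPicod

theorem feasible_s_eq_three_even (m : ℕ) (hm : 8 ≤ m) (heven : Even m) :
    ∃ G : Fin (m / 2) → ZMod m → ZMod 2,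
      IsDecentralizedCode m 3 G ∧ Correct m 3 G ∧ Secure m 3 G := by
  have : NeZero m := ⟨by omega⟩
  have h2 : 2 ∣ m := heven.two_dvd
  have h2m : (2 : ZMod m) ≠ 0 := by
    rw [← Nat.cast_ofNat, Ne, ZMod.natCast_eq_zero_iff]
    exact fun h => by have := Nat.le_of_dvd two_pos h; omega
  refine ⟨pairCode m, pairCode_isDecentralizedCode (by norm_num), fun i => ?_, fun i => ?_⟩
  all_goals obtain ⟨j, hj⟩ := exists_decSet_pairCode_three_eq_singleton h2 h2m i
  · exact hj ▸ Set.singleton_nonempty j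
  · exact hj ▸ Set.subsingleton_singleton
end

section
/- For every even integer m ≥ 8 there exists a decentralized linear code of length ℓ = 3 for parameters (m, s = m − 3) that is both correct and secure. -/
open SDPicod

namespace SDPicod

open Submodule Set

section RowSpace

variable {K ι κ : Type*}

theorem ker_funLeft_eq_span_single [Semiring K] [Fintype ι] [DecidableEq ι] (g : κ → ι) :
    LinearMap.ker (LinearMap.funLeft K K g) =
      span K {v | ∃ k ∈ (range g)ᶜ, v = Pi.single k 1} := by
  refine le_antisymm (fun v hv => ?_) (span_le.2 ?_)
  · rw [← Finset.univ_sum_single v]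
    refine sum_mem fun k _ => ?_
    by_cases hk : k ∈ range g
    · obtain ⟨x, rfl⟩ := hk
      rw [show v (g x) = 0 from congrFun hv x, Pi.single_zero]
      exact zero_mem _
    · rw [show Pi.single k (v k) = v k • Pi.single k (1 : K) by
        rw [← Pi.single_smul, smul_eq_mul, mul_one]]
      exact smul_mem _ _ (subset_span ⟨k, hk, rfl⟩)
  · rintro _ ⟨k, hk, rfl⟩
    funext x
    exact Pi.single_eq_of_ne (fun h => hk ⟨x, h⟩) _

theorem mem_span_union_single_iff [Ring K] [Fintype ι] [DecidableEq ι] (g : κ → ι)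
    (S : Set (ι → K)) (v : ι → K) :
    v ∈ span K (S ∪ {v | ∃ k ∈ (range g)ᶜ, v = Pi.single k 1}) ↔
      LinearMap.funLeft K K g v ∈ span K (LinearMap.funLeft K K g '' S) := by
  rw [span_union, ← ker_funLeft_eq_span_single, ← comap_map_eq, mem_comap, map_span]

theorem funLeft_single_of_injective [Semiring K] [DecidableEq ι] [DecidableEq κ] {g : κ → ι}
    (hg : Function.Injective g) (d : κ) (x : K) :
    LinearMap.funLeft K K g (Pi.single (g d) x) = Pi.single d x := by
  funext e
  simp [LinearMap.funLeft_apply, Pi.single_apply, hg.eq_iff]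

theorem single_mem_span_rows [CommSemiring K] [Fintype ι] [DecidableEq ι] [DecidableEq κ]
    (c : κ → ι → K) {d : κ} (f : Module.Dual K (ι → K))
    (hf : ∀ e, f (c e) = (Pi.single d 1 : κ → K) e) :
    (Pi.single d 1 : κ → K) ∈ span K (range fun t e => c e t) := by
  rw [mem_span_range_iff_exists_fun]
  refine ⟨fun t => f fun j => if t = j then 1 else 0, funext fun e => ?_⟩
  simp [← hf, LinearMap.pi_apply_eq_sum_univ f (c e), Finset.sum_apply, mul_comm]

theorem single_notMem_span_rows [Ring K] [Nontrivial K] [DecidableEq κ] (c : κ → ι → K)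
    {d d' : κ} (hne : d ≠ d') (hc : c d = c d') :
    (Pi.single d 1 : κ → K) ∉ span K (range fun t e => c e t) := by
  set φ : (κ → K) →ₗ[K] K :=
    LinearMap.proj (R := K) (φ := fun _ : κ => K) d - LinearMap.proj d'
  have hker : span K (range fun t e => c e t) ≤ LinearMap.ker φ := by
    rw [span_le]
    rintro _ ⟨t, rfl⟩
    simp [φ, hc]
  intro h
  simpa [φ, hne.symm] using hker h

theorem exists_dual_eq_zero_eq_one {V : Type*} [Field K] [AddCommGroup V] [Module K V] {a b : V}
    (h : b ∉ K ∙ a) : ∃ f : Module.Dual K V, f a = 0 ∧ f b = 1 := by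
  obtain ⟨f, hfb, hfa⟩ := exists_dual_map_eq_bot_of_notMem h inferInstance
  refine ⟨(f b)⁻¹ • f, ?_, by simp [hfb]⟩
  have : f a ∈ (K ∙ a).map f := mem_map_of_mem (mem_span_singleton_self a)
  simp_all

end RowSpace

section Window

variable {m : ℕ}

def window (n : ℕ) (i : ZMod m) (d : Fin n) : ZMod m := i + 1 + ((d : ℕ) : ZMod m)

theorem window_injective {n : ℕ} (hn : n ≤ m) (i : ZMod m) :
    Function.Injective (window n i) := by
  intro d d' h
  have := congrArg ZMod.val (add_left_cancel h)
  rw [ZMod.val_natCast_of_lt (by omega), ZMod.val_natCast_of_lt (by omega)] at this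
  exact Fin.ext this

variable [NeZero m]

theorem mem_sideInfo_iff {s : ℕ} (hs : s ≤ m) {i j : ZMod m} :
    j ∈ sideInfo m s i ↔ (i - j).val < s := by
  constructor
  · rintro ⟨k, hk, rfl⟩
    rw [Finset.mem_range] at hk
    rwa [sub_sub_cancel, ZMod.val_natCast_of_lt (by omega)]
  · exact fun h => ⟨(i - j).val, Finset.mem_range.2 h, by simp⟩

theorem sideInfo_eq_compl_range_window {s n : ℕ} (h : s + n = m) (i : ZMod m) :
    sideInfo m s i = (range (window n i))ᶜ := by
  ext j
  rw [mem_sideInfo_iff (by omega), mem_compl_iff, mem_range, iff_not_comm, not_lt]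
  constructor
  · rintro ⟨d, rfl⟩
    have hd := d.isLt
    have : i - window n i d = ((m - 1 - d : ℕ) : ZMod m) := by
      rw [window, Nat.cast_sub (by omega), Nat.cast_sub (by omega), ZMod.natCast_self]
      ring
    rw [this, ZMod.val_natCast_of_lt (by omega)]
    omega
  · intro hj
    have hlt := ZMod.val_lt (i - j)
    refine ⟨⟨m - 1 - (i - j).val, by omega⟩, ?_⟩
    rw [window, Fin.val_mk, Nat.cast_sub (by omega), Nat.cast_sub (by omega), ZMod.natCast_self,
      ZMod.natCast_zmod_val]
    ring

theorem decSet_eq_image_window {s n ℓ : ℕ} (h : s + n = m) (G : Fin ℓ → ZMod m → ZMod 2)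
    (i : ZMod m) :
    decSet m s G i = window n i ''
      {d | Pi.single d 1 ∈ span (ZMod 2) (range fun t => G t ∘ window n i)} := by
  have hinj : Function.Injective (window n i) := window_injective (by omega) i
  ext j
  simp only [decSet, sideInfo_eq_compl_range_window h, mem_span_union_single_iff, mem_ofPred_eq,
    notMem_compl_iff, mem_image, ← range_comp]
  constructor
  · rintro ⟨⟨d, rfl⟩, hd⟩
    rw [funLeft_single_of_injective hinj] at hd
    exact ⟨d, hd, rfl⟩
  · rintro ⟨d, hd, rfl⟩
    rw [funLeft_single_of_injective hinj]
    exact ⟨⟨d, rfl⟩, hd⟩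

end Window

section Patterns

variable {K ι : Type*} [Field K] [Fintype ι] [DecidableEq ι]

theorem setOf_single_mem_span_rows_left {a b : ι → K} (h : LinearIndependent K ![a, b]) :
    {d : Fin 3 | Pi.single d 1 ∈ span K (range fun t e => ![a, a, b] e t)} = {2} := by
  have hb : b ∉ K ∙ a := by
    rw [LinearIndependent.pair_symm_iff, linearIndependent_fin2] at h
    simpa [mem_span_singleton] using h.2
  obtain ⟨f, hfa, hfb⟩ := exists_dual_eq_zero_eq_one hb
  ext d
  simp only [mem_ofPred_eq, mem_singleton_iff]
  fin_cases d
  · simpa using single_notMem_span_rows ![a, a, b] (d := 0) (d' := 1) (by decide) rfl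
  · simpa using single_notMem_span_rows ![a, a, b] (d := 1) (d' := 0) (by decide) rfl
  · refine iff_of_true (single_mem_span_rows _ f fun e => ?_) rfl
    fin_cases e <;> simp [hfa, hfb]

theorem setOf_single_mem_span_rows_right {a b : ι → K} (h : LinearIndependent K ![a, b]) :
    {d : Fin 3 | Pi.single d 1 ∈ span K (range fun t e => ![a, b, b] e t)} = {0} := by
  have ha : a ∉ K ∙ b := by
    rw [linearIndependent_fin2] at h
    simpa [mem_span_singleton] using h.2
  obtain ⟨f, hfb, hfa⟩ := exists_dual_eq_zero_eq_one ha
  ext d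
  simp only [mem_ofPred_eq, mem_singleton_iff]
  fin_cases d
  · refine iff_of_true (single_mem_span_rows _ f fun e => ?_) rfl
    fin_cases e <;> simp [hfa, hfb]
  · simpa using single_notMem_span_rows ![a, b, b] (d := 1) (d' := 2) (by decide) rfl
  · simpa using single_notMem_span_rows ![a, b, b] (d := 2) (d' := 1) (by decide) rfl

end Patterns

theorem linearIndependent_pair_zmod_two_iff {V : Type*} [AddCommGroup V] [Module (ZMod 2) V]
    {a b : V} : LinearIndependent (ZMod 2) ![a, b] ↔ a ≠ 0 ∧ b ≠ 0 ∧ a ≠ b := by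
  rw [linearIndependent_fin2]
  simp only [Matrix.cons_val_one, Matrix.cons_val_zero]
  constructor
  · rintro ⟨hb, h⟩
    exact ⟨by simpa [eq_comm] using h 0, hb, by simpa [eq_comm] using h 1⟩
  · rintro ⟨ha, hb, hab⟩
    refine ⟨hb, fun r => ?_⟩
    obtain rfl | rfl : r = 0 ∨ r = 1 := by decide +revert
    · simpa [eq_comm] using ha
    · simpa [eq_comm] using hab

def pairColor (P p : ℕ) : Fin 3 → ZMod 2 :=
  if p % P = 0 then ![1, 0, 0]
  else if p % P + 1 = P then ![1, 0, 1]
  else if Even (p % P) then ![0, 0, 1] else ![0, 1, 0]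

def code (m : ℕ) (t : Fin 3) (j : ZMod m) : ZMod 2 := pairColor (m / 2) (j.val / 2) t

theorem pairColor_mod (P p : ℕ) : pairColor P (p % P) = pairColor P p := by
  simp only [pairColor, Nat.mod_mod]

theorem linearIndependent_pairColor {P p : ℕ} (hP : 4 ≤ P) (hp : p ≤ P) :
    LinearIndependent (ZMod 2) ![pairColor P p, pairColor P (p + 1)] := by
  rw [linearIndependent_pair_zmod_two_iff]
  rcases (by omega : p = 0 ∨ p = P ∨ p + 1 = P ∨ p + 2 = P ∨ (1 ≤ p ∧ p + 2 < P))
    with rfl | hp | hp | hp | ⟨hp1, hp2⟩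
  · simp [pairColor, Nat.mod_eq_of_lt (show 1 < P by omega), show 1 + 1 ≠ P by omega]
  · rw [hp]
    simp [pairColor, Nat.add_mod_left, Nat.mod_eq_of_lt (show 1 < P by omega),
      show 1 + 1 ≠ P by omega]
  · subst hp
    simp [pairColor, Nat.mod_eq_of_lt (show p < p + 1 by omega), show p ≠ 0 by omega]
  · subst hp
    by_cases h : Even p <;>
      simp [pairColor, Nat.mod_eq_of_lt (show p < p + 2 by omega),
        Nat.mod_eq_of_lt (show p + 1 < p + 2 by omega), show p ≠ 0 by omega, h]
  · by_cases h : Even p <;>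
      simp [pairColor, Nat.mod_eq_of_lt (show p < P by omega),
        Nat.mod_eq_of_lt (show p + 1 < P by omega), show p ≠ 0 by omega,
        show p + 1 ≠ P by omega, show p + 1 + 1 ≠ P by omega, Nat.even_add_one, h]

theorem exists_pairColor_apply_eq_zero {P : ℕ} (hP : 4 ≤ P) (t : Fin 3) :
    ∃ q < P, pairColor P (q + 1) t = 0 ∧ pairColor P (q + 2) t = 0 := by
  fin_cases t
  · refine ⟨0, by omega, ?_⟩
    simp [pairColor, Nat.mod_eq_of_lt (show 1 < P by omega), Nat.mod_eq_of_lt (show 2 < P by omega),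
      show 1 + 1 ≠ P by omega, show 2 + 1 ≠ P by omega]
  · refine ⟨P - 2, by omega, ?_⟩
    rw [show P - 2 + 1 = P - 1 by omega, show P - 2 + 2 = P by omega]
    simp [pairColor, Nat.mod_eq_of_lt (show P - 1 < P by omega), show P - 1 + 1 = P by omega,
      show P - 1 ≠ 0 by omega]
  · refine ⟨P - 1, by omega, ?_⟩
    rw [show P - 1 + 1 = P by omega, show P - 1 + 2 = P + 1 by omega]
    simp [pairColor, Nat.add_mod_left, Nat.mod_eq_of_lt (show 1 < P by omega),
      show 1 + 1 ≠ P by omega]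

section Code

variable {m P : ℕ} [NeZero m]

theorem code_window (hm : m = 2 * P) (t : Fin 3) (i : ZMod m) (d : Fin 3) :
    code m t (window 3 i d) = pairColor P ((i.val + 1 + d) / 2) t := by
  have : window 3 i d = ((i.val + 1 + d : ℕ) : ZMod m) := by simp [window]
  have hdiv (x : ℕ) : x % m / 2 = x / 2 % P := by rw [hm, Nat.mod_mul_right_div_self]
  rw [code, this, ZMod.val_natCast, show m / 2 = P by omega, hdiv, pairColor_mod]

theorem code_comp_window_of_odd (hm : m = 2 * P) {i : ZMod m} {q : ℕ} (hi : i.val = 2 * q + 1) :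
    (fun t => code m t ∘ window 3 i) =
      fun t e => ![pairColor P (q + 1), pairColor P (q + 1), pairColor P (q + 2)] e t := by
  funext t d
  rw [Function.comp_apply, code_window hm, hi]
  fin_cases d <;> dsimp only <;> exact congrArg (pairColor P · t) (by omega)

theorem code_comp_window_of_even (hm : m = 2 * P) {i : ZMod m} {q : ℕ} (hi : i.val = 2 * q) :
    (fun t => code m t ∘ window 3 i) =
      fun t e => ![pairColor P q, pairColor P (q + 1), pairColor P (q + 1)] e t := by
  funext t d
  rw [Function.comp_apply, code_window hm, hi]
  fin_cases d <;> dsimp only <;> exact congrArg (pairColor P · t) (by omega)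

theorem exists_decSet_code_eq_singleton (hm : m = 2 * P) (hP : 4 ≤ P) (i : ZMod m) :
    ∃ j, decSet m (m - 3) (code m) i = {j} := by
  have hi := ZMod.val_lt i
  rw [decSet_eq_image_window (n := 3) (by omega)]
  obtain ⟨q, hq | hq⟩ := Nat.even_or_odd' i.val
  · rw [code_comp_window_of_even hm hq, setOf_single_mem_span_rows_right
      (linearIndependent_pairColor (p := q) hP (by omega)), image_singleton]
    exact ⟨_, rfl⟩
  · rw [code_comp_window_of_odd hm hq, setOf_single_mem_span_rows_left
      (linearIndependent_pairColor (p := q + 1) hP (by omega)), image_singleton]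
    exact ⟨_, rfl⟩

theorem isDecentralizedCode_code (hm : m = 2 * P) (hP : 4 ≤ P) :
    IsDecentralizedCode m (m - 3) (code m) := by
  intro t
  obtain ⟨q, hq, h1, h2⟩ := exists_pairColor_apply_eq_zero hP t
  have hi : ((2 * q + 1 : ℕ) : ZMod m).val = 2 * q + 1 := ZMod.val_natCast_of_lt (by omega)
  refine ⟨((2 * q + 1 : ℕ) : ZMod m), ?_⟩
  rw [sideInfo_eq_compl_range_window (n := 3) (by omega), Function.support_subset_iff']
  simp only [notMem_compl_iff, forall_mem_range]
  intro d
  have := congrFun (congrFun (code_comp_window_of_odd hm hi) t) d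
  fin_cases d <;> simp_all

end Code

end SDPicod

theorem feasible_s_eq_m_sub_three_even (m : ℕ) (hm : 8 ≤ m) (heven : Even m) :
    ∃ G : Fin 3 → ZMod m → ZMod 2,
      IsDecentralizedCode m (m - 3) G ∧ Correct m (m - 3) G ∧
      Secure m (m - 3) G := by
  obtain ⟨P, rfl⟩ := heven
  have : NeZero (P + P) := ⟨by omega⟩
  have hm2 : P + P = 2 * P := by omega
  have hP : 4 ≤ P := by omega
  refine ⟨code (P + P), isDecentralizedCode_code hm2 hP, fun i => ?_, fun i => ?_⟩
  · obtain ⟨j, hj⟩ := exists_decSet_code_eq_singleton hm2 hP i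
    exact hj ▸ Set.singleton_nonempty j
  · obtain ⟨j, hj⟩ := exists_decSet_code_eq_singleton hm2 hP i
    exact hj ▸ Set.subsingleton_singleton
end
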